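/- Let (G,B) be a finite connected graph with boundary and nonempty interior Ω = V∖B, and let δ ≥ 2 be the minimum degree in G among interior vertices (i.e., δ = min_{x∈Ω} deg_G(x)). Then λ₁(G,B) ≤ δ, and equality holds if and only if G is a star graph (one interior vertex adjacent to all boundary vertices). -/
import Mathlib


open scoped Classical
open Finset

/-- The Dirichlet energy `∑_{{x,y} ∈ E} (f(x) - f(y))²` of a function on the vertices,
computed as half of the sum over ordered adjacent pairs. -/
noncomputable def dirichletForm {V : Type*} [Fintype V] (G : SimpleGraph V) (f : V → ℝ) : ℝ :=
  (∑ x : V, ∑ y : V, if G.Adj x y then (f x - f y) ^ 2 else 0) / 2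

/-- The first Dirichlet eigenvalue of a graph `G` with boundary `B`:
the infimum of Rayleigh quotients of nonzero functions vanishing on `B`. -/
noncomputable def lambda1 {V : Type*} [Fintype V] (G : SimpleGraph V) (B : Finset V) : ℝ :=
  sInf { r : ℝ | ∃ f : V → ℝ, (∀ x ∈ B, f x = 0) ∧ f ≠ 0 ∧
    r = dirichletForm G f / ∑ x ∈ Bᶜ, f x ^ 2 }

/-- The distance from a vertex to a set of vertices. -/
noncomputable def distToSet {V : Type*} (G : SimpleGraph V) (B : Finset V) (v : V) : ℕ :=
  sInf { n : ℕ | ∃ b ∈ B, G.dist v b = n }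

/-- The inscribed radius of a graph with boundary: `max_{v ∈ V} dist(v, B)`. -/
noncomputable def inradius {V : Type*} [Fintype V] (G : SimpleGraph V) (B : Finset V) : ℕ :=
  Finset.univ.sup fun v => distToSet G B v

/-- The diameter of a graph: `max_{v,w ∈ V} dist(v, w)`. -/
noncomputable def graphDiam {V : Type*} [Fintype V] (G : SimpleGraph V) : ℕ :=
  Finset.univ.sup fun v => Finset.univ.sup fun w => G.dist v w

/-- The set of leaves (degree-one vertices) of a graph. -/
noncomputable def leaves {V : Type*} [Fintype V] (G : SimpleGraph V) : Finset V :=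
  Finset.univ.filter fun v => G.degree v = 1


lemma sum_ite_adj {V : Type*} [Fintype V] (G : SimpleGraph V) (x : V) (c : ℝ) :
    ∑ y : V, (if G.Adj x y then c else 0) = (G.degree x : ℝ) * c := by
  rw [Finset.sum_ite, Finset.sum_const, Finset.sum_const_zero, add_zero]
  simp [SimpleGraph.degree, SimpleGraph.neighborFinset_eq_filter, mul_comm]

lemma df_formula {V : Type*} [Fintype V] (G : SimpleGraph V) (f : V → ℝ) :
    dirichletForm G f = (∑ x : V, (G.degree x : ℝ) * f x ^ 2)
      - ∑ x : V, ∑ y : V, (if G.Adj x y then f x * f y else 0) := by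
  unfold dirichletForm
  have h1 : ∀ x y : V, (if G.Adj x y then (f x - f y) ^ 2 else 0)
      = (if G.Adj x y then f x ^ 2 else 0) + (if G.Adj x y then f y ^ 2 else 0)
        - 2 * (if G.Adj x y then f x * f y else 0) := by
    intro x y; split_ifs <;> ring
  simp only [h1, Finset.sum_sub_distrib, Finset.sum_add_distrib, ← Finset.mul_sum]
  have h2 : ∀ x : V, ∑ y : V, (if G.Adj x y then f x ^ 2 else 0) = (G.degree x : ℝ) * f x ^ 2 :=
    fun x => sum_ite_adj G x _
  have h3 : (∑ x : V, ∑ y : V, (if G.Adj x y then f y ^ 2 else 0))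
      = ∑ x : V, (G.degree x : ℝ) * f x ^ 2 := by
    rw [Finset.sum_comm]
    refine Finset.sum_congr rfl fun y _ => ?_
    have hc : ∀ x : V, (if G.Adj x y then f y ^ 2 else 0) = if G.Adj y x then f y ^ 2 else 0 :=
      fun x => by rw [SimpleGraph.adj_comm]
    simp only [hc]; exact sum_ite_adj G y _
  simp only [h2, h3]
  ring

lemma df_single {V : Type*} [Fintype V] (G : SimpleGraph V) (x : V) (a : ℝ) :
    dirichletForm G (fun v => if v = x then a else 0) = (G.degree x : ℝ) * a ^ 2 := by
  rw [df_formula]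
  have h1 : (∑ v : V, (G.degree v : ℝ) * (if v = x then a else 0) ^ 2)
      = (G.degree x : ℝ) * a ^ 2 := by
    rw [Finset.sum_eq_single x]
    · simp
    · intro v _ hv; simp [hv]
    · intro h; exact absurd (Finset.mem_univ x) h
  have h2 : (∑ v : V, ∑ w : V, (if G.Adj v w then
      (if v = x then a else 0) * (if w = x then a else 0) else 0)) = 0 := by
    apply Finset.sum_eq_zero; intro v _
    apply Finset.sum_eq_zero; intro w _
    split_ifs with h hv hw <;> simp_all
  rw [h1, h2, sub_zero]

lemma df_two {V : Type*} [Fintype V] (G : SimpleGraph V) {x y : V} (hxy : x ≠ y) (a b : ℝ) :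
    dirichletForm G (fun v => if v = x then a else if v = y then b else 0)
      = (G.degree x : ℝ) * a ^ 2 + (G.degree y : ℝ) * b ^ 2
        - (if G.Adj x y then 2 * (a * b) else 0) := by
  set f : V → ℝ := fun v => if v = x then a else if v = y then b else 0 with hf
  have hfx : f x = a := by simp [hf]
  have hfy : f y = b := by simp [hf, hxy.symm]
  have hf0 : ∀ v, v ≠ x → v ≠ y → f v = 0 := fun v h1 h2 => by simp [hf, h1, h2]
  rw [df_formula]
  have hpair : ({x, y} : Finset V) ⊆ Finset.univ := Finset.subset_univ _
  have h1 : (∑ v : V, (G.degree v : ℝ) * f v ^ 2)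
      = (G.degree x : ℝ) * a ^ 2 + (G.degree y : ℝ) * b ^ 2 := by
    rw [← Finset.sum_subset hpair]
    · rw [Finset.sum_pair hxy, hfx, hfy]
    · intro v _ hv
      simp only [Finset.mem_insert, Finset.mem_singleton, not_or] at hv
      rw [hf0 v hv.1 hv.2]; ring
  have hS : ∀ v : V, (∑ w : V, (if G.Adj v w then f v * f w else 0))
      = f v * ((if G.Adj v x then a else 0) + (if G.Adj v y then b else 0)) := by
    intro v
    have : ∀ w : V, (if G.Adj v w then f v * f w else 0) = f v * (if G.Adj v w then f w else 0) := by
      intro w; split_ifs <;> ring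
    simp only [this, ← Finset.mul_sum]
    congr 1
    rw [← Finset.sum_subset hpair]
    · rw [Finset.sum_pair hxy, hfx, hfy]
    · intro w _ hw
      simp only [Finset.mem_insert, Finset.mem_singleton, not_or] at hw
      rw [hf0 w hw.1 hw.2]; simp
  have h2 : (∑ v : V, ∑ w : V, (if G.Adj v w then f v * f w else 0))
      = (if G.Adj x y then 2 * (a * b) else 0) := by
    simp only [hS]
    rw [← Finset.sum_subset hpair]
    · rw [Finset.sum_pair hxy, hfx, hfy]
      simp only [SimpleGraph.irrefl, if_false, if_neg (G.irrefl (v := x)), zero_add, add_zero]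
      have : G.Adj y x ↔ G.Adj x y := SimpleGraph.adj_comm _ _ _
      split_ifs with h h' h' <;> simp_all <;> ring
    · intro v _ hv
      simp only [Finset.mem_insert, Finset.mem_singleton, not_or] at hv
      rw [hf0 v hv.1 hv.2]; ring
  rw [h1, h2]

lemma df_nonneg {V : Type*} [Fintype V] (G : SimpleGraph V) (f : V → ℝ) :
    0 ≤ dirichletForm G f := by
  unfold dirichletForm
  apply div_nonneg _ (by norm_num)
  apply Finset.sum_nonneg; intro x _
  apply Finset.sum_nonneg; intro y _
  split_ifs
  · positivity
  · exact le_refl 0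

lemma lambda1_bddBelow {V : Type*} [Fintype V] (G : SimpleGraph V) (B : Finset V) :
    BddBelow { r : ℝ | ∃ f : V → ℝ, (∀ x ∈ B, f x = 0) ∧ f ≠ 0 ∧
      r = dirichletForm G f / ∑ x ∈ Bᶜ, f x ^ 2 } := by
  refine ⟨0, ?_⟩
  rintro r ⟨f, _, _, rfl⟩
  exact div_nonneg (df_nonneg G f) (Finset.sum_nonneg fun x _ => sq_nonneg _)

lemma lambda1_le {V : Type*} [Fintype V] (G : SimpleGraph V) (B : Finset V) (f : V → ℝ)
    (h0 : ∀ x ∈ B, f x = 0) (hf : f ≠ 0) :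
    lambda1 G B ≤ dirichletForm G f / ∑ x ∈ Bᶜ, f x ^ 2 :=
  csInf_le (lambda1_bddBelow G B) ⟨f, h0, hf, rfl⟩

theorem stmt13 {V : Type*} [Fintype V] (G : SimpleGraph V) (B : Finset V)
    (hconn : G.Connected)
    (hB : ∀ b ∈ B, ∃ y, y ∉ B ∧ G.Adj b y)
    (hBind : ∀ b ∈ B, ∀ b' ∈ B, ¬ G.Adj b b')
    (hΩne : (Bᶜ : Finset V).Nonempty)
    (hΩconn : (G.induce {v : V | v ∉ B}).Connected)
    (δ : ℕ) (hδ : δ = (Bᶜ : Finset V).inf' hΩne fun x => G.degree x) (hδ2 : 2 ≤ δ) :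
    lambda1 G B ≤ (δ : ℝ) ∧
    (lambda1 G B = (δ : ℝ) ↔
      ∃ v : V, v ∉ B ∧ (∀ w : V, w ≠ v → G.Adj v w) ∧
        ∀ w w' : V, G.Adj w w' → w = v ∨ w' = v) := by
  obtain ⟨x₀, hx₀Ω, hx₀deg⟩ := Finset.exists_mem_eq_inf' hΩne (fun x => G.degree x)
  rw [← hδ] at hx₀deg
  have hx₀B : x₀ ∉ B := Finset.mem_compl.mp hx₀Ω
  have hinf_le : ∀ w, w ∉ B → δ ≤ G.degree w := by
    intro w hw
    rw [hδ]; exact Finset.inf'_le _ (Finset.mem_compl.mpr hw)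
  by_cases hcase : ∃ w, w ∉ B ∧ w ≠ x₀
  · -- at least two interior vertices: lambda1 < δ and not a star
    obtain ⟨w, hwB, hwx₀⟩ := hcase
    -- find a neighbor of x₀ in the interior
    obtain ⟨u, huB, hadj⟩ : ∃ u : V, u ∉ B ∧ G.Adj x₀ u := by
      obtain ⟨p⟩ := hΩconn.preconnected ⟨x₀, hx₀B⟩ ⟨w, hwB⟩
      cases p with
      | nil => exact absurd rfl hwx₀.symm
      | cons h q => rename_i u; exact ⟨u.1, u.2, h⟩
    have hux₀ : x₀ ≠ u := G.ne_of_adj hadj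
    set d : ℝ := (G.degree u : ℝ) with hd
    set t : ℝ := 1 / (d + 1) with ht
    have hd0 : 0 ≤ d := Nat.cast_nonneg _
    have ht0 : 0 < t := by rw [ht]; positivity
    have hdt : d * t < 2 := by
      rw [ht]
      rw [mul_one_div, div_lt_iff₀ (by linarith)]
      linarith
    set f : V → ℝ := fun v => if v = x₀ then 1 else if v = u then t else 0 with hf
    have hf0 : ∀ x ∈ B, f x = 0 := by
      intro x hx
      have h1 : x ≠ x₀ := fun h => hx₀B (h ▸ hx)
      have h2 : x ≠ u := fun h => huB (h ▸ hx)
      simp [hf, h1, h2]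
    have hfne : f ≠ 0 := by
      intro h
      have := congrFun h x₀
      simp [hf] at this
    have hdf : dirichletForm G f = (δ : ℝ) + d * t ^ 2 - 2 * t := by
      rw [hf, df_two G hux₀, if_pos hadj, ← hd, hx₀deg]
      push_cast
      ring
    have hden : (∑ x ∈ Bᶜ, f x ^ 2) = 1 + t ^ 2 := by
      rw [← Finset.sum_subset (s₁ := ({x₀, u} : Finset V))]
      · rw [Finset.sum_pair hux₀]
        simp [hf, hux₀.symm]
      · intro v hv
        rcases Finset.mem_insert.mp hv with h | h
        · exact h ▸ hx₀Ω
        · exact (Finset.mem_singleton.mp h) ▸ Finset.mem_compl.mpr huB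
      · intro v _ hv
        simp only [Finset.mem_insert, Finset.mem_singleton, not_or] at hv
        simp [hf, hv.1, hv.2]
    have hlt : lambda1 G B < (δ : ℝ) := by
      refine lt_of_le_of_lt (lambda1_le G B f hf0 hfne) ?_
      rw [hdf, hden]
      rw [div_lt_iff₀ (by positivity)]
      have hδ2' : (2 : ℝ) ≤ (δ : ℝ) := by exact_mod_cast hδ2
      nlinarith [sq_nonneg t, mul_pos ht0 ht0]
    refine ⟨le_of_lt hlt, ⟨fun h => absurd h (ne_of_lt hlt), fun hstar => ?_⟩⟩
    -- star contradicts two interior vertices with min degree ≥ 2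
    obtain ⟨v, hvB, hvadj, hvedge⟩ := hstar
    have key : ∀ z, z ∉ B → z ≠ v → False := by
      intro z hzB hzv
      have hdegz : G.degree z ≤ 1 := by
        have hsub : G.neighborFinset z ⊆ {v} := by
          intro y hy
          rw [SimpleGraph.mem_neighborFinset] at hy
          rcases hvedge z y hy with h | h
          · exact absurd h hzv
          · exact Finset.mem_singleton.mpr h
        calc G.degree z = (G.neighborFinset z).card := rfl
          _ ≤ ({v} : Finset V).card := Finset.card_le_card hsub
          _ = 1 := Finset.card_singleton v
      have := hinf_le z hzB
      omega
    by_cases hx₀v : x₀ = v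
    · exact (key u huB (fun h => hux₀ (hx₀v ▸ h ▸ rfl))).elim
    · exact (key x₀ hx₀B hx₀v).elim
  · -- exactly one interior vertex x₀: it's a star and lambda1 = δ
    push_neg at hcase
    have huniq : ∀ z, z ∉ B → z = x₀ := hcase
    have hBc : (Bᶜ : Finset V) = {x₀} := by
      ext z
      simp only [Finset.mem_compl, Finset.mem_singleton]
      exact ⟨fun h => huniq z h, fun h => h ▸ hx₀B⟩
    have hstar : x₀ ∉ B ∧ (∀ w : V, w ≠ x₀ → G.Adj x₀ w) ∧
        ∀ w w' : V, G.Adj w w' → w = x₀ ∨ w' = x₀ := by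
      refine ⟨hx₀B, ?_, ?_⟩
      · intro w hw
        have hwB : w ∈ B := by
          by_contra hc; exact hw (huniq w hc)
        obtain ⟨y, hyB, hyadj⟩ := hB w hwB
        have : y = x₀ := huniq y hyB
        exact (this ▸ hyadj).symm
      · intro w w' hadj
        by_contra hc
        push_neg at hc
        have hwB : w ∈ B := by by_contra h; exact hc.1 (huniq w h)
        have hw'B : w' ∈ B := by by_contra h; exact hc.2 (huniq w' h)
        exact hBind w hwB w' hw'B hadj
    have hS : { r : ℝ | ∃ f : V → ℝ, (∀ x ∈ B, f x = 0) ∧ f ≠ 0 ∧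
        r = dirichletForm G f / ∑ x ∈ Bᶜ, f x ^ 2 } = {(δ : ℝ)} := by
      ext r
      simp only [Set.mem_setOf_eq, Set.mem_singleton_iff]
      constructor
      · rintro ⟨f, h0, hne, rfl⟩
        have hfx₀ : f x₀ ≠ 0 := by
          intro hx
          apply hne
          funext z
          by_cases hz : z ∈ B
          · exact h0 z hz
          · rw [huniq z hz]; exact hx
        have hfeq : f = fun v => if v = x₀ then f x₀ else 0 := by
          funext z
          by_cases hz : z = x₀
          · simp [hz]
          · have hzB : z ∈ B := by by_contra h; exact hz (huniq z h)
            simp [hz, h0 z hzB]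
        rw [hfeq, df_single, hBc, Finset.sum_singleton, hx₀deg]
        norm_num
        rw [mul_div_assoc, div_self (pow_ne_zero 2 hfx₀), mul_one]
      · rintro rfl
        refine ⟨fun v => if v = x₀ then 1 else 0, ?_, ?_, ?_⟩
        · intro x hx
          have : x ≠ x₀ := fun h => hx₀B (h ▸ hx)
          simp [this]
        · intro h
          have := congrFun h x₀
          simp at this
        · rw [df_single, hBc, Finset.sum_singleton]
          simp [hx₀deg]
    have hlam : lambda1 G B = (δ : ℝ) := by
      unfold lambda1
      rw [hS, csInf_singleton]
    exact ⟨le_of_eq hlam, ⟨fun _ => ⟨x₀, hstar⟩, fun _ => hlam⟩⟩
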